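/- arXiv:1812.07218 — 2 statements merged into one kernel-verified Lean document; each statement's English description precedes it below -/
import Mathlib

section
/- For real numbers a, b, define x_b = (∫_{-3}^0 ∫_0^{3+x} + ∫_0^1 ∫_0^{3-x}) x(ax+b)y dy dx. Then x_b = 0 if and only if 49a − 20b = 0. Moreover, if 49a = 20b with b > 0, then the affine function x ↦ ax + b (with a = 20b/49) vanishes at x = −49/20 ∈ [−3,1]. -/
/-- Barycenter obstruction for Mabuchi metrics on the symmetric Fano threefold
RC5: `x_b = 0` iff `49a - 20b = 0`, and then (for `b > 0`) the affine function
`ax + b` vanishes at `x = -49/20 ∈ [-3,1]`. -/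
theorem barycenter_obstruction_RC5 (a b : ℝ) :
    ((∫ x in (-3:ℝ)..0, ∫ y in (0:ℝ)..(3 + x), x * (a * x + b) * y) +
        (∫ x in (0:ℝ)..1, ∫ y in (0:ℝ)..(3 - x), x * (a * x + b) * y) = 0 ↔
      49 * a - 20 * b = 0) ∧
    (49 * a = 20 * b → 0 < b →
      a * (-(49:ℝ) / 20) + b = 0 ∧ (-(49:ℝ) / 20) ∈ Set.Icc (-3:ℝ) 1) := by
  have inner : ∀ (x c : ℝ), (∫ y in (0:ℝ)..c, x * (a * x + b) * y)
      = x * (a * x + b) * (c ^ 2 / 2) := by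
    intro x c
    simp only [mul_assoc]
    rw [intervalIntegral.integral_const_mul, intervalIntegral.integral_const_mul, integral_id]
    ring
  have deriv1 : ∀ x : ℝ, HasDerivAt
      (fun x : ℝ => a / 10 * x ^ 5 + (6 * a + b) / 8 * x ^ 4 + (9 * a + 6 * b) / 6 * x ^ 3
        + 9 * b / 4 * x ^ 2)
      (x * (a * x + b) * ((3 + x) ^ 2 / 2)) x := by
    intro x
    have h := ((((hasDerivAt_pow 5 x).const_mul (a / 10)).add
      ((hasDerivAt_pow 4 x).const_mul ((6 * a + b) / 8))).add
      ((hasDerivAt_pow 3 x).const_mul ((9 * a + 6 * b) / 6))).add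
      ((hasDerivAt_pow 2 x).const_mul (9 * b / 4))
    refine h.congr_deriv ?_
    push_cast; ring
  have deriv2 : ∀ x : ℝ, HasDerivAt
      (fun x : ℝ => a / 10 * x ^ 5 + (b - 6 * a) / 8 * x ^ 4 + (9 * a - 6 * b) / 6 * x ^ 3
        + 9 * b / 4 * x ^ 2)
      (x * (a * x + b) * ((3 - x) ^ 2 / 2)) x := by
    intro x
    have h := ((((hasDerivAt_pow 5 x).const_mul (a / 10)).add
      ((hasDerivAt_pow 4 x).const_mul ((b - 6 * a) / 8))).add
      ((hasDerivAt_pow 3 x).const_mul ((9 * a - 6 * b) / 6))).add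
      ((hasDerivAt_pow 2 x).const_mul (9 * b / 4))
    refine h.congr_deriv ?_
    push_cast; ring
  have I1 : (∫ x in (-3:ℝ)..0, ∫ y in (0:ℝ)..(3 + x), x * (a * x + b) * y)
      = 81 * a / 20 - 27 * b / 8 := by
    simp only [inner]
    rw [intervalIntegral.integral_eq_sub_of_hasDerivAt (fun x _ => deriv1 x)
      (by apply Continuous.intervalIntegrable; continuity)]
    ring
  have I2 : (∫ x in (0:ℝ)..1, ∫ y in (0:ℝ)..(3 - x), x * (a * x + b) * y)
      = 17 * a / 20 + 11 * b / 8 := by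
    simp only [inner]
    rw [intervalIntegral.integral_eq_sub_of_hasDerivAt (fun x _ => deriv2 x)
      (by apply Continuous.intervalIntegrable; continuity)]
    ring
  refine ⟨?_, ?_⟩
  · rw [I1, I2]
    constructor <;> intro h <;> linarith
  · intro h hb
    refine ⟨by linarith, by norm_num⟩
end

section
/- For real numbers a, b, define x_b = (∫_{-1}^0 ∫_0^2 + ∫_0^1 ∫_0^{2-x}) x(ax+b)y dy dx. Then x_b = 0 if and only if 112a − 65b = 0; and if 112a = 65b with b > 0 then ax + b > 0 for all x ∈ [−1,1]. -/
lemma inner_int (c t : ℝ) : ∫ y in (0:ℝ)..t, c * y = c * (t^2/2) := by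
  rw [intervalIntegral.integral_const_mul, integral_id]
  ring

/-- Barycenter computation showing the symmetric Fano threefold RA3 admits a
Mabuchi metric: `x_b = 0` iff `112a - 65b = 0`, in which case (for `b > 0`)
`ax + b > 0` on `[-1,1]`. -/
theorem barycenter_condition_RA3 (a b : ℝ) :
    ((∫ x in (-1:ℝ)..0, ∫ y in (0:ℝ)..2, x * (a * x + b) * y) +
        (∫ x in (0:ℝ)..1, ∫ y in (0:ℝ)..(2 - x), x * (a * x + b) * y) = 0 ↔
      112 * a - 65 * b = 0) ∧
    (112 * a = 65 * b → 0 < b →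
      ∀ x ∈ Set.Icc (-1:ℝ) 1, 0 < a * x + b) := by
  constructor
  · have e1 : (∫ x in (-1:ℝ)..0, ∫ y in (0:ℝ)..2, x * (a * x + b) * y)
        = 2*a/3 - b := by
      simp_rw [inner_int]
      have : ∀ x : ℝ, x * (a * x + b) * (2^2/2) = a * 2 * x^2 + 2*b * x := by
        intro x; ring
      simp_rw [this]
      rw [intervalIntegral.integral_add ((by fun_prop : Continuous _).intervalIntegrable _ _) ((by fun_prop : Continuous _).intervalIntegrable _ _),
        intervalIntegral.integral_const_mul, intervalIntegral.integral_const_mul,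
        integral_pow, integral_id]
      norm_num
      ring
    have e2 : (∫ x in (0:ℝ)..1, ∫ y in (0:ℝ)..(2 - x), x * (a * x + b) * y)
        = 4*a/15 + 11*b/24 := by
      simp_rw [inner_int]
      have : ∀ x : ℝ, x * (a * x + b) * ((2-x)^2/2)
          = (a/2) * x^4 + ((b-4*a)/2) * x^3 + (2*a - 2*b) * x^2 + 2*b * x := by
        intro x; ring
      simp_rw [this]
      rw [intervalIntegral.integral_add ((by fun_prop : Continuous _).intervalIntegrable _ _) ((by fun_prop : Continuous _).intervalIntegrable _ _),
        intervalIntegral.integral_add ((by fun_prop : Continuous _).intervalIntegrable _ _) ((by fun_prop : Continuous _).intervalIntegrable _ _),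
        intervalIntegral.integral_add ((by fun_prop : Continuous _).intervalIntegrable _ _) ((by fun_prop : Continuous _).intervalIntegrable _ _)]
      rw [intervalIntegral.integral_const_mul, intervalIntegral.integral_const_mul,
        intervalIntegral.integral_const_mul, intervalIntegral.integral_const_mul,
        integral_pow, integral_pow, integral_pow, integral_id]
      norm_num
      ring
    rw [e1, e2]
    constructor <;> intro h <;> linarith
  · intro h hb x hx
    obtain ⟨h1, h2⟩ := hx
    rcases le_or_gt 0 a with ha | ha
    · nlinarith
    · nlinarith
end
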